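/- Let $(a_1,\dots,a_n)$ with $n \geq 1$ and all $a_i \leq -2$, and let $x = [a_1,\dots,a_n]^-$. Then $-1 - 1/x$ is again a rational number that equals $[b_1,\dots,b_m]^-$ for some string $(b_1,\dots,b_m)$ with all $b_j \leq -2$; i.e., every string with entries $\leq -2$ admits a complementary string. -/

import Mathlib

/-!
The map `x ↦ y` with `1/x + 1/y = -1` sends `(-∞, -1)` to itself, so it suffices that every
rational `x < -1` is a negative continued fraction with entries `≤ -2`. This is the negative
continued fraction algorithm: `x = ⌊x⌋ - 1/x'` with `x' = -1/fract x < -1`, and `x'` has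
denominator the numerator of `fract x`, which is smaller than the denominator of `x`.
-/

/-- The negative continued fraction `[a₁,…,aₙ]⁻`, computed in `ℚ`. -/
def ncf : List ℤ → ℚ
  | [] => 0
  | a :: l => (a : ℚ) - 1 / ncf l

section NegOne

variable {K : Type*} [Field K] [LinearOrder K] [IsStrictOrderedRing K] {t : K}

lemma neg_one_lt_inv_of_lt_neg_one (ht : t < -1) : -1 < t⁻¹ := by
  rw [lt_inv_of_neg (by norm_num) (by linarith), inv_neg_one]
  exact ht

lemma inv_lt_neg_one_of_neg_one_lt (h1 : -1 < t) (h0 : t < 0) : t⁻¹ < -1 := by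
  rw [inv_lt_of_neg h0 (by norm_num), inv_neg_one]
  exact h1

end NegOne

lemma ncf_lt_neg_one {a : List ℤ} (ha : a ≠ []) (hle : ∀ x ∈ a, x ≤ -2) : ncf a < -1 := by
  induction a with
  | nil => exact absurd rfl ha
  | cons x l ih =>
    have hx : (x : ℚ) ≤ -2 := mod_cast hle x List.mem_cons_self
    rcases eq_or_ne l [] with rfl | hl
    · simp only [ncf, div_zero, sub_zero]
      linarith
    · have hl' := ih hl fun y hy => hle y (List.mem_cons_of_mem _ hy)
      have := neg_one_lt_inv_of_lt_neg_one hl'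
      simp only [ncf, one_div]
      linarith

lemma Rat.den_neg_inv_fract_lt {x : ℚ} (hx : Int.fract x ≠ 0) :
    (-(Int.fract x)⁻¹).den < x.den := by
  rw [Rat.den_neg_eq_den, Rat.den_inv_of_ne_zero hx, ← Rat.den_intFract x]
  have hlt := Rat.num_lt_denom_iff.2 (Int.fract_lt_one x)
  have hnonneg := Rat.num_nonneg.2 (Int.fract_nonneg x)
  omega

lemma exists_ncf_eq_of_lt_neg_one (x : ℚ) (hx : x < -1) :
    ∃ b : List ℤ, b ≠ [] ∧ (∀ i ∈ b, i ≤ -2) ∧ ncf b = x := by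
  induction hd : x.den using Nat.strong_induction_on generalizing x with
  | _ d ih =>
  have hfloor : ⌊x⌋ ≤ -2 := by
    have : ⌊x⌋ < -1 := Int.floor_lt.2 (by exact_mod_cast hx)
    omega
  rcases eq_or_ne (Int.fract x) 0 with hfract | hfract
  · refine ⟨[⌊x⌋], List.cons_ne_nil _ _, by simpa using hfloor, ?_⟩
    rw [Int.fract, sub_eq_zero] at hfract
    simp [ncf, ← hfract]
  · have hpos : 0 < Int.fract x := (Int.fract_nonneg x).lt_of_ne' hfract
    have hx' : -(Int.fract x)⁻¹ < -1 :=
      neg_lt_neg ((one_lt_inv₀ hpos).2 (Int.fract_lt_one x))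
    obtain ⟨b, -, hble, hb⟩ :=
      ih _ (hd ▸ Rat.den_neg_inv_fract_lt hfract) _ hx' rfl
    refine ⟨⌊x⌋ :: b, List.cons_ne_nil _ _, ?_, ?_⟩
    · simpa [hfloor] using hble
    · simp [ncf, hb, Int.floor_add_fract]

/-- every string with entries `≤ -2` admits a complementary
string: if `x = [a₁,…,aₙ]⁻` with all `aᵢ ≤ -2`, there is a string
`(b₁,…,b_m)` with all `b_j ≤ -2` whose continued fraction `y = [b₁,…,b_m]⁻`
satisfies `1/x + 1/y = -1` (and `y < -1`). -/
theorem stmt_7 (a : List ℤ) (ha : a ≠ []) (hlea : ∀ x ∈ a, x ≤ -2) :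
    ∃ b : List ℤ, b ≠ [] ∧ (∀ x ∈ b, x ≤ -2) ∧ ncf b < -1 ∧
      1 / ncf a + 1 / ncf b = -1 := by
  have hx := ncf_lt_neg_one ha hlea
  have hy : (-1 - (ncf a)⁻¹)⁻¹ < -1 := by
    have := neg_one_lt_inv_of_lt_neg_one hx
    have := inv_lt_zero.2 (show ncf a < 0 by linarith)
    exact inv_lt_neg_one_of_neg_one_lt (by linarith) (by linarith)
  obtain ⟨b, hb, hble, hbx⟩ := exists_ncf_eq_of_lt_neg_one _ hy
  refine ⟨b, hb, hble, hbx ▸ hy, ?_⟩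
  rw [hbx, one_div, one_div, inv_inv]
  ring
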